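/- Let P(t) = (1/(t²+1))·(t·e₁ + e_{p+1})·(t·e₁ + e_{p+1})ᵀ ∈ ℝ^{(p+q)×(p+q)} for t ∈ ℝ. Then m(θ)·P(t)·m(θ) = λ(θ,t)·P(T_θ(t)), where T_θ(t) = (t + tanh θ)/(1 + t·tanh θ) and λ(θ,t) = (1/(t²+1))·[(t cosh θ + sinh θ)² + (t sinh θ + cosh θ)²], provided 1 + t·tanh θ ≠ 0. -/

import Mathlib

/-- The hyperbolic rotation `m(θ)` in the `(1, p+1)` coordinate plane of `ℝ^{p+q}`. -/
noncomputable def mMat (p q : ℕ) (θ : ℝ) : Matrix (Fin (p + q)) (Fin (p + q)) ℝ :=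
  Matrix.of fun i j =>
    if (i : ℕ) = 0 ∧ (j : ℕ) = 0 then Real.cosh θ
    else if (i : ℕ) = 0 ∧ (j : ℕ) = p then Real.sinh θ
    else if (i : ℕ) = p ∧ (j : ℕ) = 0 then Real.sinh θ
    else if (i : ℕ) = p ∧ (j : ℕ) = p then Real.cosh θ
    else if i = j then 1 else 0

/-- The vector `v(t) = t·e₁ + e_{p+1} ∈ ℝ^{p+q}`. -/
def vvec (p q : ℕ) (t : ℝ) : Fin (p + q) → ℝ :=
  fun i => if (i : ℕ) = 0 then t else if (i : ℕ) = p then 1 else 0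

/-- `P(t) = (1/(t²+1))·v(t)·v(t)ᵀ`. -/
noncomputable def Pmat (p q : ℕ) (t : ℝ) : Matrix (Fin (p + q)) (Fin (p + q)) ℝ :=
  (1 / (t ^ 2 + 1)) • Matrix.of fun i j => vvec p q t i * vvec p q t j

/-- `λ(θ,t) = (1/(t²+1))·[(t cosh θ + sinh θ)² + (t sinh θ + cosh θ)²]`. -/
noncomputable def lam (θ t : ℝ) : ℝ :=
  (1 / (t ^ 2 + 1)) *
    ((t * Real.cosh θ + Real.sinh θ) ^ 2 + (t * Real.sinh θ + Real.cosh θ) ^ 2)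

/-!
Since `m(θ)` is symmetric, conjugating the rank-one matrix `v vᵀ` by it gives `(m v)(m v)ᵀ`, and
`m(θ) v(t) = (t cosh θ + sinh θ) e₁ + (t sinh θ + cosh θ) e_{p+1}` is a multiple of `v(T_θ(t))`:
dividing numerator and denominator by `cosh θ` turns the ratio of its two coordinates into the
Möbius map `T_θ(t)`. The scalars then match because `λ(θ,t) / (T_θ(t)² + 1) = b² / (t² + 1)` with
`b = t sinh θ + cosh θ = cosh θ · (1 + t tanh θ)`, which is nonzero exactly when `T_θ(t)` is defined.
-/

open Matrix Real

theorem Matrix.IsSymm.mul_vecMulVec_mul {n α : Type*} [Fintype n] [CommSemiring α]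
    {M : Matrix n n α} (hM : M.IsSymm) (v : n → α) :
    M * vecMulVec v v * M = vecMulVec (M *ᵥ v) (M *ᵥ v) := by
  rw [mul_vecMulVec, vecMulVec_mul, ← mulVec_transpose, hM.eq]

def planeVec (p q : ℕ) (x y : ℝ) : Fin (p + q) → ℝ :=
  fun i => if (i : ℕ) = 0 then x else if (i : ℕ) = p then y else 0

lemma vvec_eq_planeVec (p q : ℕ) (t : ℝ) : vvec p q t = planeVec p q t 1 := rfl

lemma planeVec_eq_smul_vvec (p q : ℕ) {x y : ℝ} (hy : y ≠ 0) :
    planeVec p q x y = y • vvec p q (x / y) := by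
  ext i
  simp only [planeVec, vvec, Pi.smul_apply, smul_eq_mul]
  split_ifs <;> simp [mul_div_cancel₀ _ hy]

lemma Pmat_eq_smul_vecMulVec (p q : ℕ) (t : ℝ) :
    Pmat p q t = (1 / (t ^ 2 + 1)) • vecMulVec (vvec p q t) (vvec p q t) := rfl

lemma mMat_isSymm (p q : ℕ) (θ : ℝ) : (mMat p q θ).IsSymm := by
  ext i j
  simp only [transpose_apply, mMat, of_apply]
  by_cases h1 : (i : ℕ) = 0 <;> by_cases h2 : (j : ℕ) = 0 <;>
    by_cases h3 : (i : ℕ) = p <;> by_cases h4 : (j : ℕ) = p <;>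
    simp [h1, h2, h3, h4, eq_comm]

lemma mMat_mulVec_planeVec {p q : ℕ} (hp : 1 ≤ p) (hq : 1 ≤ q) (θ x y : ℝ) :
    mMat p q θ *ᵥ planeVec p q x y
      = planeVec p q (x * cosh θ + y * sinh θ) (x * sinh θ + y * cosh θ) := by
  let e₁ : Fin (p + q) := ⟨0, by omega⟩
  let eₚ : Fin (p + q) := ⟨p, by omega⟩
  have he : e₁ ≠ eₚ := Fin.ne_of_val_ne (by simp [e₁, eₚ]; omega)
  ext i
  rw [mulVec, dotProduct, Fintype.sum_eq_add e₁ eₚ he]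
  · simp only [mMat, planeVec, of_apply, e₁, eₚ]
    have hp0 : p ≠ 0 := by omega
    by_cases h0 : (i : ℕ) = 0
    · simp [h0, hp0]; ring
    by_cases hpi : (i : ℕ) = p
    · simp [hpi, hp0]; ring
    · simp [h0, hpi, Fin.ext_iff]
  · rintro k ⟨hk₁, hkₚ⟩
    have : (k : ℕ) ≠ 0 := fun h => hk₁ (Fin.ext h)
    have : (k : ℕ) ≠ p := fun h => hkₚ (Fin.ext h)
    simp [planeVec, *]

lemma add_tanh_div_one_add_mul_tanh (θ t : ℝ) :
    (t + tanh θ) / (1 + t * tanh θ) = (t * cosh θ + sinh θ) / (t * sinh θ + cosh θ) := by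
  have hc : cosh θ ≠ 0 := (cosh_pos θ).ne'
  have hnum : t + tanh θ = (t * cosh θ + sinh θ) / cosh θ := by
    rw [tanh_eq_sinh_div_cosh]; field_simp
  have hden : 1 + t * tanh θ = (t * sinh θ + cosh θ) / cosh θ := by
    rw [tanh_eq_sinh_div_cosh]; field_simp; ring
  rw [hnum, hden, div_div_div_cancel_right₀ hc]

lemma mul_sinh_add_cosh (θ t : ℝ) : t * sinh θ + cosh θ = cosh θ * (1 + t * tanh θ) := by
  rw [tanh_eq_sinh_div_cosh]
  field_simp
  ring

/-- `m(θ)·P(t)·m(θ) = λ(θ,t)·P((t + tanh θ)/(1 + t·tanh θ))` when `1 + t·tanh θ ≠ 0`. -/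
theorem mMat_Pmat_mMat (p q : ℕ) (hp : 1 ≤ p) (hq : 1 ≤ q) (θ t : ℝ)
    (hden : 1 + t * Real.tanh θ ≠ 0) :
    mMat p q θ * Pmat p q t * mMat p q θ
      = lam θ t • Pmat p q ((t + Real.tanh θ) / (1 + t * Real.tanh θ)) := by
  rw [add_tanh_div_one_add_mul_tanh]
  set a := t * cosh θ + sinh θ
  set b := t * sinh θ + cosh θ with hb
  have hb0 : b ≠ 0 := by
    rw [hb, mul_sinh_add_cosh]
    exact mul_ne_zero (cosh_pos θ).ne' hden
  have hmv : mMat p q θ *ᵥ vvec p q t = b • vvec p q (a / b) := by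
    rw [vvec_eq_planeVec, mMat_mulVec_planeVec hp hq, one_mul, one_mul,
      planeVec_eq_smul_vvec p q hb0]
  rw [Pmat_eq_smul_vecMulVec, Pmat_eq_smul_vecMulVec, Matrix.mul_smul, Matrix.smul_mul,
    (mMat_isSymm p q θ).mul_vecMulVec_mul, hmv, smul_vecMulVec, vecMulVec_smul, smul_smul,
    smul_smul, smul_smul]
  congr 1
  unfold lam
  field_simp
  rfl
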